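/- arXiv:2504.11410 — 2 statements merged into one kernel-verified Lean document; each statement's English description precedes it below -/
import Mathlib

section
/- Suppose xᵏ + s ∈ prox_{τ g}(xᵏ − τ ∇f(xᵏ)) with τ ≤ 1/(L + 2a), and f satisfies the descent inequality f(xᵏ + s) ≤ f(xᵏ) + ⟨∇f(xᵏ), s⟩ + (L/2)‖s‖². Then with φ = f + g one has φ(xᵏ + s) ≤ φ(xᵏ) − a‖s‖². -/
open scoped InnerProductSpace

/-- The prox set (possibly multivalued proximal mapping). -/
noncomputable def proxSet {E : Type*} [NormedAddCommGroup E]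
    (g : E → EReal) (τ : ℝ) (x : E) : Set E :=
  {u | ∀ w, g u + ((1 / (2 * τ) * ‖x - u‖ ^ 2 : ℝ) : EReal)
        ≤ g w + ((1 / (2 * τ) * ‖x - w‖ ^ 2 : ℝ) : EReal)}

/-- `g + (1/(2τ))‖·‖²` is bounded below. -/
def ProxBddAt {E : Type*} [NormedAddCommGroup E] (g : E → EReal) (τ : ℝ) : Prop :=
  ∃ β : ℝ, ∀ x, (β : EReal) ≤ g x + ((1 / (2 * τ) * ‖x‖ ^ 2 : ℝ) : EReal)

/-- `g` is proper: never `⊥` and somewhere finite. -/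
def ProperFn {E : Type*} [NormedAddCommGroup E] (g : E → EReal) : Prop :=
  (∀ x, g x ≠ ⊥) ∧ ∃ x, g x < ⊤

/-
Testing the prox inequality at `xk` and expanding
`‖τv + s‖² = ‖τv‖² + 2τ⟪v, s⟫ + ‖s‖²` gives `g (xk + s) + ⟪v, s⟫ + ‖s‖² / (2τ) ≤ g xk`.
The step-size condition `τ ≤ 1 / (L + 2a)` means `L / 2 + a ≤ 1 / (2τ)`, so adding the
descent inequality for `f` leaves a decrease of at least `a‖s‖²`.
-/

theorem one_div_two_mul_norm_smul_add_sq {E : Type*} [NormedAddCommGroup E]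
    [InnerProductSpace ℝ E] {τ : ℝ} (hτ : τ ≠ 0) (v s : E) :
    1 / (2 * τ) * ‖τ • v + s‖ ^ 2
      = (⟪v, s⟫_ℝ + 1 / (2 * τ) * ‖s‖ ^ 2) + 1 / (2 * τ) * ‖τ • v‖ ^ 2 := by
  rw [norm_add_sq_real, real_inner_smul_left]
  field_simp
  ring

theorem add_inner_add_le_of_mem_proxSet {E : Type*} [NormedAddCommGroup E]
    [InnerProductSpace ℝ E] {g : E → EReal} {τ : ℝ} (hτ : τ ≠ 0) {x s v : E}
    (h : x + s ∈ proxSet g τ (x - τ • v)) :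
    g (x + s) + ((⟪v, s⟫_ℝ + 1 / (2 * τ) * ‖s‖ ^ 2 : ℝ) : EReal) ≤ g x := by
  have key := h x
  rw [show x - τ • v - (x + s) = -(τ • v + s) by abel, show x - τ • v - x = -(τ • v) by abel,
    norm_neg, norm_neg, one_div_two_mul_norm_smul_add_sq hτ, EReal.coe_add, ← add_assoc] at key
  exact (EReal.addLECancellable_coe _).add_le_add_iff_right.1 key

theorem half_add_le_one_div_two_mul {a L τ : ℝ} (hτ : 0 < τ) (hτle : τ ≤ 1 / (L + 2 * a)) :
    L / 2 + a ≤ 1 / (2 * τ) := by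
  have hpos : 0 < L + 2 * a := one_div_pos.1 (hτ.trans_le hτle)
  rw [le_div_iff₀ hpos] at hτle
  rw [le_div_iff₀ (by positivity)]
  linarith

theorem stmt8_general {n : ℕ} (f : EuclideanSpace ℝ (Fin n) → ℝ)
    (g : EuclideanSpace ℝ (Fin n) → EReal)
    (xk s v : EuclideanSpace ℝ (Fin n))
    (a L τ : ℝ) (hτ : 0 < τ)
    (hτle : τ ≤ 1 / (L + 2 * a))
    (hprox : xk + s ∈ proxSet g τ (xk - τ • v))
    (hdesc : f (xk + s) ≤ f xk + ⟪v, s⟫_ℝ + L / 2 * ‖s‖ ^ 2) :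
    (f (xk + s) : EReal) + g (xk + s) + ((a * ‖s‖ ^ 2 : ℝ) : EReal)
      ≤ (f xk : EReal) + g xk := by
  set d : ℝ := ⟪v, s⟫_ℝ + 1 / (2 * τ) * ‖s‖ ^ 2
  have hf : f (xk + s) + a * ‖s‖ ^ 2 ≤ f xk + d := by
    linarith [mul_le_mul_of_nonneg_right (half_add_le_one_div_two_mul hτ hτle) (sq_nonneg ‖s‖)]
  calc (f (xk + s) : EReal) + g (xk + s) + ((a * ‖s‖ ^ 2 : ℝ) : EReal)
      = g (xk + s) + ((f (xk + s) + a * ‖s‖ ^ 2 : ℝ) : EReal) := by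
        rw [EReal.coe_add]; abel
    _ ≤ g (xk + s) + ((f xk + d : ℝ) : EReal) := by gcongr
    _ = (g (xk + s) + (d : EReal)) + f xk := by rw [EReal.coe_add]; abel
    _ ≤ g xk + f xk := by gcongr; exact add_inner_add_le_of_mem_proxSet hτ.ne' hprox
    _ = f xk + g xk := add_comm _ _

theorem stmt8 {n : ℕ} (f : EuclideanSpace ℝ (Fin n) → ℝ)
    (g : EuclideanSpace ℝ (Fin n) → EReal)
    (hproper : ProperFn g) (hlsc : LowerSemicontinuous g)
    (xk s v : EuclideanSpace ℝ (Fin n)) (hxk : g xk < ⊤)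
    (a L τ : ℝ) (ha : 0 < a) (hL : 0 ≤ L) (hτ : 0 < τ)
    (hτle : τ ≤ 1 / (L + 2 * a))
    (hprox : xk + s ∈ proxSet g τ (xk - τ • v))
    (hdesc : f (xk + s) ≤ f xk + ⟪v, s⟫_ℝ + L / 2 * ‖s‖ ^ 2) :
    (f (xk + s) : EReal) + g (xk + s) + ((a * ‖s‖ ^ 2 : ℝ) : EReal)
      ≤ (f xk : EReal) + g xk :=
  stmt8_general f g xk s v a L τ hτ hτle hprox hdesc
end

section
/- Let f : ℝⁿ → ℝ be differentiable with locally Lipschitz gradient on dom g, g proper lsc prox-bounded, and φ = f + g bounded below. Suppose there is a sequence (x^{k_ν}) converging to x* ∈ dom g, stepsizes τ_{k_ν} → 0⁺, and vectors d̂^{k_ν} ≠ 0 with x^{k_ν} + d̂^{k_ν} ∈ prox_{β⁻¹ τ_{k_ν} g}(x^{k_ν} − β⁻¹ τ_{k_ν} ∇f(x^{k_ν})) (for fixed β ∈ (0,1)) such that the sufficient decrease fails: φ(x^{k_ν} + d̂^{k_ν}) > φ(x^{k_ν}) − a‖d̂^{k_ν}‖² for all ν, with a > 0. Then a contradiction follows;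 i.e., such a sequence cannot exist, so for any bounded subsequence of iterates the accepted stepsizes are bounded away from zero. -/
open scoped InnerProductSpace

open Filter Topology Metric

/-! The forward points `x - t • ∇f x` converge to `x*`, and because the stepsizes vanish,
prox-boundedness of `g` forces the prox points `x + d` to converge to `x*` as well. Near `x*` the
gradient is `L`-Lipschitz, so `f (x + d) ≤ f x + ⟪∇f x, d⟫ + L ‖d‖²`. Comparing the prox point with
`x` itself in the prox problem and inserting the failed decrease test yields
`‖d‖² / (2t) < (L + a) ‖d‖²`, which is impossible once `2t (L + a) < 1`. -/

-- The mean value inequality on a segment gives the constant `K` instead of the sharp `K / 2`.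
theorem Convex.image_le_add_inner_add_of_lipschitzOnWith_gradient
    {E : Type*} [NormedAddCommGroup E] [InnerProductSpace ℝ E] [CompleteSpace E]
    {f : E → ℝ} {f' : E → E} {s : Set E} {K : NNReal} (hs : Convex ℝ s)
    (hf : ∀ x ∈ s, HasGradientAt f (f' x) x) (hf' : LipschitzOnWith K f' s)
    {p q : E} (hp : p ∈ s) (hq : q ∈ s) :
    f q ≤ f p + ⟪f' p, q - p⟫_ℝ + K * ‖q - p‖ ^ 2 := by
  let φ : E → ℝ := fun z ↦ f z - InnerProductSpace.toDual ℝ E (f' p) z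
  have hφ : ∀ z ∈ segment ℝ p q, HasFDerivWithinAt φ
      (InnerProductSpace.toDual ℝ E (f' z) - InnerProductSpace.toDual ℝ E (f' p))
      (segment ℝ p q) z := fun z hz ↦
    ((hf z (hs.segment_subset hp hq hz)).hasFDerivAt.sub
      (InnerProductSpace.toDual ℝ E (f' p)).hasFDerivAt).hasFDerivWithinAt
  have hbound : ∀ z ∈ segment ℝ p q,
      ‖InnerProductSpace.toDual ℝ E (f' z) - InnerProductSpace.toDual ℝ E (f' p)‖
        ≤ K * ‖q - p‖ := by
    intro z hz
    rw [← map_sub, LinearIsometryEquiv.norm_map]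
    calc ‖f' z - f' p‖ ≤ K * ‖z - p‖ :=
          hf'.norm_sub_le (hs.segment_subset hp hq hz) hp
      _ ≤ K * ‖q - p‖ := by gcongr; exact norm_sub_le_of_mem_segment hz
  have := (convex_segment p q).norm_image_sub_le_of_norm_hasFDerivWithin_le hφ hbound
    (left_mem_segment ℝ p q) (right_mem_segment ℝ p q)
  simp only [φ, InnerProductSpace.toDual_apply_apply] at this
  rw [inner_sub_right, sq, ← mul_assoc]
  linarith [(Real.le_norm_self _).trans this]


theorem toReal_add_le_of_mem_proxSet {E : Type*} [NormedAddCommGroup E] {g : E → EReal}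
    (hg : ∀ x, g x ≠ ⊥) {t : ℝ} {y u w : E} (hu : u ∈ proxSet g t y) (hw : g w ≠ ⊤) :
    g u ≠ ⊤ ∧ (g u).toReal + 1 / (2 * t) * ‖y - u‖ ^ 2
      ≤ (g w).toReal + 1 / (2 * t) * ‖y - w‖ ^ 2 := by
  have h := hu w
  rw [← EReal.coe_toReal hw (hg w), ← EReal.coe_add] at h
  have hu_top : g u ≠ ⊤ := by
    intro hu_top
    rw [hu_top, EReal.top_add_coe] at h
    exact (EReal.coe_lt_top _).not_ge h
  refine ⟨hu_top, ?_⟩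
  rwa [← EReal.coe_toReal hu_top (hg u), ← EReal.coe_add, EReal.coe_le_coe_iff] at h

theorem sq_norm_sub_le_of_mem_proxSet {E : Type*} [NormedAddCommGroup E] {g : E → EReal}
    (hg : ∀ x, g x ≠ ⊥) {τ₀ c : ℝ} (hτ₀ : 0 < τ₀)
    (hc : ∀ x, (c : EReal) ≤ g x + ((1 / (2 * τ₀) * ‖x‖ ^ 2 : ℝ) : EReal))
    {x₀ : E} (hx₀ : g x₀ ≠ ⊤) {t : ℝ} (ht : 0 < t) (htτ₀ : 4 * t ≤ τ₀) {y u : E}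
    (hu : u ∈ proxSet g t y) :
    ‖y - u‖ ^ 2 ≤ 2 * ‖y - x₀‖ ^ 2 + 4 * t * ((g x₀).toReal - c) + 4 * t / τ₀ * ‖y‖ ^ 2 := by
  obtain ⟨hu_top, hopt⟩ := toReal_add_le_of_mem_proxSet hg hu hx₀
  have hcu : c ≤ (g u).toReal + 1 / (2 * τ₀) * ‖u‖ ^ 2 := by
    have h := hc u
    rwa [← EReal.coe_toReal hu_top (hg u), ← EReal.coe_add, EReal.coe_le_coe_iff] at h
  have hnorm_u : ‖u‖ ^ 2 ≤ 2 * ‖y - u‖ ^ 2 + 2 * ‖y‖ ^ 2 := by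
    have h := norm_sub_le y (y - u)
    rw [sub_sub_cancel] at h
    nlinarith [norm_nonneg u, sq_nonneg (‖y - u‖ - ‖y‖)]
  have hopt' : ‖y - u‖ ^ 2 ≤ ‖y - x₀‖ ^ 2 + 2 * t * ((g x₀).toReal - (g u).toReal) := by
    have h := mul_le_mul_of_nonneg_left hopt (by positivity : (0 : ℝ) ≤ 2 * t)
    field_simp at h
    linarith
  have hcu' : 2 * t * (c - (g u).toReal) ≤ t / τ₀ * ‖u‖ ^ 2 := by
    have h := mul_le_mul_of_nonneg_left hcu (by positivity : (0 : ℝ) ≤ 2 * t)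
    field_simp at h ⊢
    linarith
  have hq : t / τ₀ ≤ 1 / 4 := by rw [div_le_iff₀ hτ₀]; linarith
  have hu_sq : t / τ₀ * ‖u‖ ^ 2 ≤ t / τ₀ * (2 * ‖y - u‖ ^ 2 + 2 * ‖y‖ ^ 2) := by gcongr
  have hyu_sq : t / τ₀ * ‖y - u‖ ^ 2 ≤ 1 / 4 * ‖y - u‖ ^ 2 := by gcongr
  rw [mul_div_assoc]
  linarith

theorem tendsto_of_mem_proxSet {E ι : Type*} [NormedAddCommGroup E] {g : E → EReal}
    (hg : ∀ x, g x ≠ ⊥) {τ₀ : ℝ} (hτ₀ : 0 < τ₀) (hbdd : ProxBddAt g τ₀) {x₀ : E}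
    (hx₀ : g x₀ ≠ ⊤) {l : Filter ι} {t : ι → ℝ} {y u : ι → E} (ht : Tendsto t l (𝓝[>] 0))
    (hy : Tendsto y l (𝓝 x₀)) (hu : ∀ᶠ i in l, u i ∈ proxSet g (t i) (y i)) :
    Tendsto u l (𝓝 x₀) := by
  obtain ⟨c, hc⟩ := hbdd
  obtain ⟨ht0, htpos⟩ := tendsto_nhdsWithin_iff.1 ht
  have hbound : Tendsto (fun i ↦ 2 * ‖y i - x₀‖ ^ 2 + 4 * t i * ((g x₀).toReal - c)
      + 4 * t i / τ₀ * ‖y i‖ ^ 2) l (𝓝 0) := by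
    have h := ((((hy.sub_const x₀).norm.pow 2).const_mul 2).add
      (((ht0.const_mul 4).mul_const ((g x₀).toReal - c)))).add
      (((ht0.const_mul 4).div_const τ₀).mul (hy.norm.pow 2))
    simpa using h
  have hsmall : ∀ᶠ i in l, 4 * t i ≤ τ₀ :=
    (ht0.const_mul 4).eventually (ge_mem_nhds (by linarith))
  have hsq : Tendsto (fun i ↦ ‖y i - u i‖ ^ 2) l (𝓝 0) := by
    refine squeeze_zero' (.of_forall fun i ↦ by positivity) ?_ hbound
    filter_upwards [htpos, hsmall, hu] with i hti hti' hui
    exact sq_norm_sub_le_of_mem_proxSet hg hτ₀ hc hx₀ hti hti' hui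
  have hdiff : Tendsto (fun i ↦ y i - u i) l (𝓝 0) :=
    tendsto_zero_iff_norm_tendsto_zero.2 (by simpa using hsq.sqrt)
  simpa using hy.sub hdiff

theorem one_lt_two_mul_mul_add_of_mem_proxSet {E : Type*} [NormedAddCommGroup E]
    [InnerProductSpace ℝ E] {f : E → ℝ} {g : E → EReal} (hg : ∀ x, g x ≠ ⊥) {x d v : E}
    {t L a : ℝ} (ht : 0 < t) (hd : d ≠ 0)
    (hdesc : f (x + d) ≤ f x + ⟪v, d⟫_ℝ + L * ‖d‖ ^ 2)
    (hprox : x + d ∈ proxSet g t (x - t • v))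
    (hfail : (f x : EReal) + g x < (f (x + d) : EReal) + g (x + d) + ((a * ‖d‖ ^ 2 : ℝ) : EReal)) :
    1 < 2 * t * (L + a) := by
  have hgx : g x ≠ ⊤ := by
    intro h
    rw [h, EReal.add_top_of_ne_bot (EReal.coe_ne_bot _)] at hfail
    exact not_top_lt hfail
  obtain ⟨hgu, hopt⟩ := toReal_add_le_of_mem_proxSet hg hprox hgx
  have hfail' : f x + (g x).toReal < f (x + d) + (g (x + d)).toReal + a * ‖d‖ ^ 2 := by
    rw [← EReal.coe_toReal hgx (hg x), ← EReal.coe_toReal hgu (hg _)] at hfail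
    exact_mod_cast hfail
  have hstep : x - t • v - (x + d) = -(d + t • v) := by abel
  have hstay : x - t • v - x = -(t • v) := by abel
  rw [hstep, hstay, norm_neg, norm_neg, norm_add_sq_real, real_inner_smul_right,
    real_inner_comm] at hopt
  have hopt' : ‖d‖ ^ 2 + 2 * t * ⟪v, d⟫_ℝ ≤ 2 * t * ((g x).toReal - (g (x + d)).toReal) := by
    have h := mul_le_mul_of_nonneg_left hopt (by positivity : (0 : ℝ) ≤ 2 * t)
    field_simp at h
    linarith
  have hd2 : 0 < ‖d‖ ^ 2 := by positivity
  have h : 1 * ‖d‖ ^ 2 < 2 * t * (L + a) * ‖d‖ ^ 2 := by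
    nlinarith [mul_le_mul_of_nonneg_left hdesc ht.le, mul_lt_mul_of_pos_left hfail' ht]
  exact lt_of_mul_lt_mul_right h hd2.le

theorem stmt11_general {n : ℕ} (f : EuclideanSpace ℝ (Fin n) → ℝ)
    (f' : EuclideanSpace ℝ (Fin n) → EuclideanSpace ℝ (Fin n))
    (hdiff : ∀ x, HasGradientAt f (f' x) x)
    (g : EuclideanSpace ℝ (Fin n) → EReal)
    (hproper : ProperFn g)
    (τg : ℝ) (hτg : 0 < τg)
    (hthr : ∀ τ : ℝ, 0 < τ → τ < τg → ProxBddAt g τ)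
    (hloclip : ∀ x : EuclideanSpace ℝ (Fin n), g x < ⊤ →
      ∃ L : ℝ, 0 ≤ L ∧ ∃ ε : ℝ, 0 < ε ∧
        ∀ y ∈ ball x ε, ∀ z ∈ ball x ε, ‖f' y - f' z‖ ≤ L * ‖y - z‖)
    (β : ℝ) (hβ : β ∈ Set.Ioo (0 : ℝ) 1) (a : ℝ)
    (x : ℕ → EuclideanSpace ℝ (Fin n)) (xstar : EuclideanSpace ℝ (Fin n))
    (hx : Tendsto x atTop (𝓝 xstar)) (hstar : g xstar < ⊤)
    (τ : ℕ → ℝ) (hτpos : ∀ ν, 0 < τ ν)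
    (hτ0 : Tendsto τ atTop (𝓝 0))
    (d : ℕ → EuclideanSpace ℝ (Fin n)) (hd0 : ∀ ν, d ν ≠ 0)
    (hprox : ∀ ν, x ν + d ν ∈ proxSet g (τ ν / β) (x ν - (τ ν / β) • f' (x ν)))
    (hfail : ∀ ν, (f (x ν) : EReal) + g (x ν)
        < (f (x ν + d ν) : EReal) + g (x ν + d ν) + ((a * ‖d ν‖ ^ 2 : ℝ) : EReal)) :
    False := by
  obtain ⟨L, hL, ε, hε, hlip⟩ := hloclip xstar hstar
  have hf' : LipschitzOnWith ⟨L, hL⟩ f' (ball xstar ε) :=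
    .of_dist_le_mul fun y hy z hz ↦ by rw [dist_eq_norm, dist_eq_norm]; exact hlip y hy z hz
  have hstep0 : Tendsto (fun ν ↦ τ ν / β) atTop (𝓝 0) := by simpa using hτ0.div_const β
  have hstep : Tendsto (fun ν ↦ τ ν / β) atTop (𝓝[>] 0) :=
    tendsto_nhdsWithin_iff.2 ⟨hstep0, .of_forall fun ν ↦ div_pos (hτpos ν) hβ.1⟩
  have hgrad : Tendsto (fun ν ↦ f' (x ν)) atTop (𝓝 (f' xstar)) :=
    ((hf'.continuousOn.continuousAt (ball_mem_nhds xstar hε)).tendsto).comp hx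
  have hfwd : Tendsto (fun ν ↦ x ν - (τ ν / β) • f' (x ν)) atTop (𝓝 xstar) := by
    simpa using hx.sub (hstep0.smul hgrad)
  have hnext : Tendsto (fun ν ↦ x ν + d ν) atTop (𝓝 xstar) :=
    tendsto_of_mem_proxSet hproper.1 (half_pos hτg) (hthr _ (half_pos hτg) (half_lt_self hτg))
      hstar.ne hstep hfwd (.of_forall hprox)
  have hsmall : ∀ᶠ ν in atTop, 2 * (τ ν / β) * (L + a) < 1 := by
    have h := (hstep0.const_mul 2).mul_const (L + a)
    rw [mul_zero, zero_mul] at h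
    exact h.eventually (gt_mem_nhds one_pos)
  obtain ⟨ν, hxν, hnextν, hsmallν⟩ := ((hx.eventually (ball_mem_nhds xstar hε)).and
    ((hnext.eventually (ball_mem_nhds xstar hε)).and hsmall)).exists
  have hdesc := (convex_ball xstar ε).image_le_add_inner_add_of_lipschitzOnWith_gradient
    (fun z _ ↦ hdiff z) hf' hxν hnextν
  rw [add_sub_cancel_left] at hdesc
  exact hsmallν.not_gt <| one_lt_two_mul_mul_add_of_mem_proxSet hproper.1
    (div_pos (hτpos ν) hβ.1) (hd0 ν) hdesc (hprox ν) (hfail ν)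

/-- The scenario of Proposition 4.2 (failure of sufficient decrease along vanishing
stepsizes) is impossible; hence accepted stepsizes along bounded subsequences are
bounded away from zero. -/
theorem stmt11 {n : ℕ} (f : EuclideanSpace ℝ (Fin n) → ℝ)
    (f' : EuclideanSpace ℝ (Fin n) → EuclideanSpace ℝ (Fin n))
    (hdiff : ∀ x, HasGradientAt f (f' x) x)
    (g : EuclideanSpace ℝ (Fin n) → EReal)
    (hproper : ProperFn g) (hlsc : LowerSemicontinuous g)
    (τg : ℝ) (hτg : 0 < τg)
    (hthr : ∀ τ : ℝ, 0 < τ → τ < τg → ProxBddAt g τ)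
    (m : ℝ) (hbdd : ∀ y, (m : EReal) ≤ (f y : EReal) + g y)
    (hloclip : ∀ x : EuclideanSpace ℝ (Fin n), g x < ⊤ →
      ∃ L : ℝ, 0 ≤ L ∧ ∃ ε : ℝ, 0 < ε ∧
        ∀ y ∈ ball x ε, ∀ z ∈ ball x ε, ‖f' y - f' z‖ ≤ L * ‖y - z‖)
    (β : ℝ) (hβ : β ∈ Set.Ioo (0 : ℝ) 1) (a : ℝ) (ha : 0 < a)
    (x : ℕ → EuclideanSpace ℝ (Fin n)) (xstar : EuclideanSpace ℝ (Fin n))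
    (hx : Tendsto x atTop (𝓝 xstar)) (hstar : g xstar < ⊤)
    (τ : ℕ → ℝ) (hτpos : ∀ ν, 0 < τ ν) (hτlt : ∀ ν, τ ν / β < τg)
    (hτ0 : Tendsto τ atTop (𝓝 0))
    (d : ℕ → EuclideanSpace ℝ (Fin n)) (hd0 : ∀ ν, d ν ≠ 0)
    (hprox : ∀ ν, x ν + d ν ∈ proxSet g (τ ν / β) (x ν - (τ ν / β) • f' (x ν)))
    (hfail : ∀ ν, (f (x ν) : EReal) + g (x ν)
        < (f (x ν + d ν) : EReal) + g (x ν + d ν) + ((a * ‖d ν‖ ^ 2 : ℝ) : EReal)) :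
    False :=
  stmt11_general f f' hdiff g hproper τg hτg hthr hloclip β hβ a x xstar hx hstar τ hτpos hτ0 d hd0
    hprox hfail
end
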